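/- Let n ≥ 3 be odd and let P_n be the path graph on vertices 1,…,n with edges {i,i+1}. Then Σ_{σ ∈ Aut(P_n)} Σ_{μ matching of P_n with σ(μ)=μ} w^μ(σ) = a_1^n·U_n(b_1,β_1) + a_1·a_2^{(n−1)/2}·β_2·U_{(n−1)/2}(b_2,β_2), where U_m(Y,Z) evaluated at ring elements Y, Z denotes Σ_{μ matching of P_m} Y^{|μ|} Z^{(m−1)−|μ|}. -/

import Mathlib

open scoped Classical

noncomputable section

/-- Variables of the extended Walsh cycle index ring:
`a k`, `b k`, `c k`, `β k`, `γ k` for `k ≥ 1`. -/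
inductive WVar : Type
  | a : ℕ → WVar
  | b : ℕ → WVar
  | c : ℕ → WVar
  | beta : ℕ → WVar
  | gamma : ℕ → WVar

/-- The extended Walsh cycle index ring `ℚ[a;b;c;β;γ]`. -/
abbrev WRing : Type := MvPolynomial WVar ℚ

/-- The variable `a_k`. -/
def va (k : ℕ) : WRing := MvPolynomial.X (WVar.a k)
/-- The variable `b_k`. -/
def vb (k : ℕ) : WRing := MvPolynomial.X (WVar.b k)
/-- The variable `c_k`. -/
def vc (k : ℕ) : WRing := MvPolynomial.X (WVar.c k)
/-- The variable `β_k`. -/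
def vbeta (k : ℕ) : WRing := MvPolynomial.X (WVar.beta k)
/-- The variable `γ_k`. -/
def vgamma (k : ℕ) : WRing := MvPolynomial.X (WVar.gamma k)

/-- The path graph `P_n` on `Fin n`, edges `{i, i+1}`. -/
def pathG (n : ℕ) : SimpleGraph (Fin n) :=
  SimpleGraph.fromRel (fun i j => (i : ℕ) + 1 = (j : ℕ))

/-- The cycle graph `C_n` on `Fin n`, edges `{i, i+1 mod n}`. -/
def cycG (n : ℕ) : SimpleGraph (Fin n) :=
  SimpleGraph.fromRel (fun i j => ((i : ℕ) + 1) % n = (j : ℕ))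

/-- The matchings of a graph `G`: finsets of pairwise disjoint edges of `G`. -/
def matchings {V : Type*} [Fintype V] (G : SimpleGraph V) : Finset (Finset (Sym2 V)) :=
  Finset.univ.filter (fun μ =>
    (↑μ : Set (Sym2 V)) ⊆ G.edgeSet ∧
    ∀ e ∈ μ, ∀ f ∈ μ, e ≠ f → ∀ v : V, v ∈ e → v ∉ f)

/-- `U_m(Y,Z) = Σ_{μ matching of P_m} Y^{|μ|} Z^{(m-1)-|μ|}`. -/
def Upoly {S : Type*} [CommSemiring S] (m : ℕ) (Y Z : S) : S :=
  ∑ μ ∈ matchings (pathG m), Y ^ μ.card * Z ^ ((m - 1) - μ.card)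

/-- `T_m(Y,Z) = Σ_{μ matching of C_m} Y^{|μ|} Z^{m-|μ|}` for `m ≥ 3`, with the
conventions `T_1(Y,Z) = Z` and `T_2(Y,Z) = 2YZ + Z²`. -/
def Tpoly {S : Type*} [CommSemiring S] (m : ℕ) (Y Z : S) : S :=
  if m = 1 then Z
  else if m = 2 then 2 * Y * Z + Z ^ 2
  else ∑ μ ∈ matchings (cycG m), Y ^ μ.card * Z ^ (m - μ.card)

/-- The permutation induced by `σ` on unordered pairs. -/
def edgePerm {V : Type*} (σ : Equiv.Perm V) : Equiv.Perm (Sym2 V) where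
  toFun := Sym2.map σ
  invFun := Sym2.map σ.symm
  left_inv := by intro e; induction e using Sym2.ind with | _ x y => simp
  right_inv := by intro e; induction e using Sym2.ind with | _ x y => simp

/-- The size of the cycle (orbit) of `σ` through the vertex `v`. -/
def orbSize {V : Type*} [Fintype V] (σ : Equiv.Perm V) (v : V) : ℕ :=
  (Finset.univ.filter fun u => σ.SameCycle v u).card

/-- `σ_k`: the number of `k`-cycles of `σ` on the vertices. -/
def vcyc {V : Type*} [Fintype V] (σ : Equiv.Perm V) (k : ℕ) : ℕ :=
  (Finset.univ.filter fun v => orbSize σ v = k).card / k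

/-- The length of the cycle of the induced edge permutation through `e`. -/
def eOrbLen {V : Type*} [Fintype V] (σ : Equiv.Perm V) (e : Sym2 V) : ℕ :=
  (Finset.univ.filter fun f => (edgePerm σ).SameCycle e f).card

/-- The edge cycle through `e` (of length `l = eOrbLen σ e`) is cylindrical:
`σ^l` fixes both endpoints of every edge of the cycle. -/
def IsCylE {V : Type*} [Fintype V] (σ : Equiv.Perm V) (e : Sym2 V) : Prop :=
  ∀ f : Sym2 V, (edgePerm σ).SameCycle e f → ∀ u v : V, f = s(u, v) →
    (σ ^ eOrbLen σ e) u = u ∧ (σ ^ eOrbLen σ e) v = v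

/-- The edge cycle through `e` (of length `l = eOrbLen σ e`) is Möbius:
`σ^l` exchanges the endpoints of every edge of the cycle. -/
def IsMobE {V : Type*} [Fintype V] (σ : Equiv.Perm V) (e : Sym2 V) : Prop :=
  ∀ f : Sym2 V, (edgePerm σ).SameCycle e f → ∀ u v : V, f = s(u, v) →
    u ≠ v ∧ (σ ^ eOrbLen σ e) u = v ∧ (σ ^ eOrbLen σ e) v = u

/-- The edge set of `G` as a finset. -/
def eFin {V : Type*} [Fintype V] (G : SimpleGraph V) : Finset (Sym2 V) :=
  G.edgeFinset

/-- `cyl_{k,Y}(σ)`: the number of cylindrical edge cycles of length `k` of sort `Y`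
(consisting of edges of the matching `μ`). -/
def cylCntY {V : Type*} [Fintype V] (G : SimpleGraph V) (μ : Finset (Sym2 V))
    (σ : Equiv.Perm V) (k : ℕ) : ℕ :=
  ((eFin G).filter fun e => e ∈ μ ∧ eOrbLen σ e = k ∧ IsCylE σ e).card / k

/-- `möb_{k,Y}(σ)`: the number of Möbius edge cycles of length `k` of sort `Y`. -/
def mobCntY {V : Type*} [Fintype V] (G : SimpleGraph V) (μ : Finset (Sym2 V))
    (σ : Equiv.Perm V) (k : ℕ) : ℕ :=
  ((eFin G).filter fun e => e ∈ μ ∧ eOrbLen σ e = k ∧ IsMobE σ e).card / k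

/-- `cyl_{k,Z}(σ)`: the number of cylindrical edge cycles of length `k` of sort `Z`
(consisting of edges not in the matching `μ`). -/
def cylCntZ {V : Type*} [Fintype V] (G : SimpleGraph V) (μ : Finset (Sym2 V))
    (σ : Equiv.Perm V) (k : ℕ) : ℕ :=
  ((eFin G).filter fun e => e ∉ μ ∧ eOrbLen σ e = k ∧ IsCylE σ e).card / k

/-- `möb_{k,Z}(σ)`: the number of Möbius edge cycles of length `k` of sort `Z`. -/
def mobCntZ {V : Type*} [Fintype V] (G : SimpleGraph V) (μ : Finset (Sym2 V))
    (σ : Equiv.Perm V) (k : ℕ) : ℕ :=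
  ((eFin G).filter fun e => e ∉ μ ∧ eOrbLen σ e = k ∧ IsMobE σ e).card / k

/-- The extended cycle index monomial `w^μ(σ)` of a matched graph `(G,μ)` with an
automorphism `σ` fixing `μ`. -/
def wM {V : Type*} [Fintype V] (G : SimpleGraph V) (μ : Finset (Sym2 V))
    (σ : Equiv.Perm V) : WRing :=
  (∏ k ∈ Finset.range (Fintype.card V * Fintype.card V + 2), va k ^ vcyc σ k) *
  (∏ k ∈ Finset.range (Fintype.card V * Fintype.card V + 2), vb k ^ cylCntY G μ σ k) *
  (∏ k ∈ Finset.range (Fintype.card V * Fintype.card V + 2), vc k ^ mobCntY G μ σ k) *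
  (∏ k ∈ Finset.range (Fintype.card V * Fintype.card V + 2), vbeta k ^ cylCntZ G μ σ k) *
  (∏ k ∈ Finset.range (Fintype.card V * Fintype.card V + 2), vgamma k ^ mobCntZ G μ σ k)

/-- The automorphisms of `G`, as a finset of permutations of the vertices. -/
def autF {V : Type*} [Fintype V] (G : SimpleGraph V) : Finset (Equiv.Perm V) :=
  Finset.univ.filter fun σ => ∀ u v : V, G.Adj (σ u) (σ v) ↔ G.Adj u v

/-- The matchings of `G` fixed by the automorphism `σ` (i.e. `σ(μ) = μ`). -/
def fixedMatchings {V : Type*} [Fintype V] (G : SimpleGraph V) (σ : Equiv.Perm V) :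
    Finset (Finset (Sym2 V)) :=
  (matchings G).filter fun μ => μ.image (Sym2.map σ) = μ

/-!
The automorphisms of `P_n` are the identity and the reversal `ρ : i ↦ n - 1 - i`. Both are
involutions whose edge cycles all have one common length `k` (`1` for the identity; `2` for `ρ`,
since for odd `n` no edge is mapped to itself) with `σ ^ k = 1`, so every edge cycle is
cylindrical and `w^μ(σ)` only records the fixed vertices, the vertex `2`-cycles, `|μ| / k` and
`(n - 1 - |μ|) / k`. The identity contributes `a₁ⁿ U_n(b₁, β₁)`. A `ρ`-invariant matching cannot
use the middle vertex (it would contain both edges through it), so it is the mirror-symmetric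
double of a matching of the left half `P_{(n-1)/2}`; this gives the second term.
-/

open Finset

namespace Equiv.Perm

variable {α : Type*} {π : Perm α}

theorem sameCycle_iff_of_sq_eq_one (h : π ^ 2 = 1) {x y : α} :
    π.SameCycle x y ↔ y = x ∨ y = π x := by
  have hzpow : ∀ i : ℤ, π ^ i = 1 ∨ π ^ i = π := by
    intro i
    have h2 : π ^ (2 : ℤ) = 1 := by exact_mod_cast h
    obtain ⟨k, rfl | rfl⟩ := Int.even_or_odd' i
    · simp [zpow_mul, h2]
    · simp [zpow_add, zpow_mul, h2]
  constructor
  · rintro ⟨i, rfl⟩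
    rcases hzpow i with hi | hi <;> simp [hi]
  · rintro (rfl | rfl)
    exacts [SameCycle.refl _ _, ⟨1, by simp⟩]

theorem card_sameCycle_of_sq_eq_one [Fintype α] (h : π ^ 2 = 1) (x : α) :
    #{y | π.SameCycle x y} = if π x = x then 1 else 2 := by
  simp_rw [sameCycle_iff_of_sq_eq_one h]
  split_ifs with hx
  · exact Finset.card_eq_one.mpr ⟨x, by ext; simp [hx]⟩
  · rw [Finset.card_eq_two]
    exact ⟨x, π x, Ne.symm hx, by ext; simp⟩

end Equiv.Perm

section CycleIndex

theorem edgePerm_sq_eq_one {V : Type*} {σ : Equiv.Perm V} (h : σ ^ 2 = 1) :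
    edgePerm σ ^ 2 = 1 := by
  have hσ : ∀ v, σ (σ v) = v := fun v => by simpa [sq] using congrArg (· v) h
  ext e
  induction e using Sym2.ind with
  | _ x y => simp [sq, edgePerm, hσ]

variable {V : Type*} [Fintype V] {σ : Equiv.Perm V}

theorem orbSize_of_sq_eq_one (h : σ ^ 2 = 1) (v : V) :
    orbSize σ v = if σ v = v then 1 else 2 :=
  Equiv.Perm.card_sameCycle_of_sq_eq_one h v

theorem eOrbLen_of_sq_eq_one (h : σ ^ 2 = 1) (e : Sym2 V) :
    eOrbLen σ e = if Sym2.map σ e = e then 1 else 2 := by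
  convert Equiv.Perm.card_sameCycle_of_sq_eq_one (edgePerm_sq_eq_one h) e
  · unfold eOrbLen; congr
  · rfl

theorem vcyc_of_sq_eq_one [DecidableEq V] (h : σ ^ 2 = 1) (k : ℕ) :
    vcyc σ k =
      if k = 1 then #{v | σ v = v} else if k = 2 then #{v | σ v ≠ v} / 2 else 0 := by
  unfold vcyc
  simp_rw [orbSize_of_sq_eq_one h]
  split_ifs with h1 h2
  · subst h1; simp
  · subst h2; congr 2; ext v; simp
  · convert Nat.zero_div k
    simp only [card_eq_zero, filter_eq_empty_iff]
    intro v _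
    split_ifs <;> omega

theorem prod_range_pow_ite_eq {M : Type*} [CommMonoid M] (X : ℕ → M) {N j : ℕ} (hj : j < N)
    (x : ℕ) : ∏ k ∈ range N, X k ^ (if k = j then x else 0) = X j ^ x := by
  simp [pow_ite, hj]

theorem prod_range_pow_ite_ite_eq {M : Type*} [CommMonoid M] (X : ℕ → M) {N : ℕ} (hN : 2 < N)
    (x y : ℕ) :
    ∏ k ∈ range N, X k ^ (if k = 1 then x else if k = 2 then y else 0) = X 1 ^ x * X 2 ^ y := by
  rw [← prod_subset (s₁ := {1, 2}) (by simp [insert_subset_iff]; omega) fun k _ hk => ?_,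
    prod_pair (by decide)]
  · simp
  · simp_all

end CycleIndex

section UniformEdgeCycles

variable {V : Type*} [Fintype V] {G : SimpleGraph V} {σ : Equiv.Perm V} {μ : Finset (Sym2 V)}
  {k : ℕ}

theorem isCylE_of_pow_eOrbLen_eq_one {e : Sym2 V} (h : σ ^ eOrbLen σ e = 1) : IsCylE σ e := by
  intro _ _ u v _
  simp [h]

theorem not_isMobE_of_pow_eOrbLen_eq_one {e : Sym2 V} (h : σ ^ eOrbLen σ e = 1) :
    ¬ IsMobE σ e := by
  induction e using Sym2.ind with
  | _ u v =>
    intro hmob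
    obtain ⟨hne, hu, -⟩ := hmob _ (.refl _ _) u v rfl
    simp [h] at hu
    exact hne hu

variable (hk : σ ^ k = 1) (hlen : ∀ e ∈ eFin G, eOrbLen σ e = k)
include hk hlen

theorem cylCntY_of_eOrbLen_eq (hμ : μ ⊆ eFin G) (j : ℕ) :
    cylCntY G μ σ j = if j = k then #μ / k else 0 := by
  unfold cylCntY
  split_ifs with hj
  · subst hj
    congr 2
    ext e
    simp only [mem_filter]
    constructor
    · exact fun h => h.2.1
    · intro he
      have hlen' := hlen e (hμ he)
      exact ⟨hμ he, he, hlen', isCylE_of_pow_eOrbLen_eq_one (by rw [hlen', hk])⟩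
  · convert Nat.zero_div j
    simp only [card_eq_zero, filter_eq_empty_iff]
    exact fun e he h => hj (h.2.1 ▸ hlen e he)

theorem cylCntZ_of_eOrbLen_eq (hμ : μ ⊆ eFin G) (j : ℕ) :
    cylCntZ G μ σ j = if j = k then (#(eFin G) - #μ) / k else 0 := by
  unfold cylCntZ
  split_ifs with hj
  · subst hj
    rw [← card_sdiff_of_subset hμ]
    congr 2
    ext e
    simp only [mem_filter, mem_sdiff]
    constructor
    · exact fun h => ⟨h.1, h.2.1⟩
    · rintro ⟨he, heμ⟩
      exact ⟨he, heμ, hlen e he, isCylE_of_pow_eOrbLen_eq_one (by rw [hlen e he, hk])⟩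
  · convert Nat.zero_div j
    simp only [card_eq_zero, filter_eq_empty_iff]
    exact fun e he h => hj (h.2.1 ▸ hlen e he)

theorem mobCntY_of_eOrbLen_eq (j : ℕ) : mobCntY G μ σ j = 0 := by
  unfold mobCntY
  convert Nat.zero_div j
  simp only [card_eq_zero, filter_eq_empty_iff]
  exact fun e he h => not_isMobE_of_pow_eOrbLen_eq_one (by rw [hlen e he, hk]) h.2.2

theorem mobCntZ_of_eOrbLen_eq (j : ℕ) : mobCntZ G μ σ j = 0 := by
  unfold mobCntZ
  convert Nat.zero_div j
  simp only [card_eq_zero, filter_eq_empty_iff]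
  exact fun e he h => not_isMobE_of_pow_eOrbLen_eq_one (by rw [hlen e he, hk]) h.2.2

theorem wM_of_sq_eq_one [DecidableEq V] [Nonempty V] (hσ : σ ^ 2 = 1) (hk2 : k ≤ 2)
    (hμ : μ ⊆ eFin G) :
    wM G μ σ = va 1 ^ #{v | σ v = v} * va 2 ^ (#{v | σ v ≠ v} / 2) *
      vb k ^ (#μ / k) * vbeta k ^ ((#(eFin G) - #μ) / k) := by
  have hN : 2 < Fintype.card V * Fintype.card V + 2 := by
    have := Fintype.card_pos (α := V)
    nlinarith
  unfold wM
  simp_rw [vcyc_of_sq_eq_one hσ, cylCntY_of_eOrbLen_eq hk hlen hμ,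
    cylCntZ_of_eOrbLen_eq hk hlen hμ, mobCntY_of_eOrbLen_eq hk hlen,
    mobCntZ_of_eOrbLen_eq hk hlen, prod_range_pow_ite_ite_eq _ hN,
    prod_range_pow_ite_eq _ (hk2.trans_lt hN)]
  simp

end UniformEdgeCycles

section Matchings

variable {V W : Type*} [Fintype V] [Fintype W] {G : SimpleGraph V} {H : SimpleGraph W}
  {μ ν : Finset (Sym2 V)}

theorem mem_matchings : μ ∈ matchings G ↔
    (∀ e ∈ μ, e ∈ G.edgeSet) ∧ ∀ e ∈ μ, ∀ f ∈ μ, e ≠ f → ∀ v, v ∈ e → v ∉ f := by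
  simp only [matchings, mem_filter, mem_univ, true_and]
  rfl

theorem subset_eFin_of_mem_matchings (hμ : μ ∈ matchings G) : μ ⊆ eFin G := fun e he => by
  simpa [eFin] using (mem_matchings.1 hμ).1 e he

theorem image_mem_matchings [DecidableEq W] (φ : G ↪g H) (hν : ν ∈ matchings G) :
    ν.image (Sym2.map φ) ∈ matchings H := by
  obtain ⟨hedge, hdisj⟩ := mem_matchings.1 hν
  refine mem_matchings.2 ⟨?_, ?_⟩
  · simp only [mem_image, forall_exists_index, and_imp, forall_apply_eq_imp_iff₂]
    intro e he
    induction e using Sym2.ind with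
    | _ u v => simpa using hedge _ he
  · simp only [mem_image, forall_exists_index, and_imp, forall_apply_eq_imp_iff₂]
    intro e he f hf hne w hwe hwf
    obtain ⟨u, hu, rfl⟩ := Sym2.mem_map.1 hwe
    obtain ⟨u', hu', hu'u⟩ := Sym2.mem_map.1 hwf
    rw [φ.injective hu'u] at hu'
    exact hdisj e he f hf (fun h => hne (h ▸ rfl)) u hu hu'

theorem preimage_mem_matchings [DecidableEq W] (φ : G ↪g H) {μ : Finset (Sym2 W)}
    (hμ : μ ∈ matchings H) :
    ({e | Sym2.map φ e ∈ μ} : Finset (Sym2 V)) ∈ matchings G := by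
  obtain ⟨hedge, hdisj⟩ := mem_matchings.1 hμ
  refine mem_matchings.2 ⟨?_, ?_⟩
  · intro e he
    induction e using Sym2.ind with
    | _ u v => simpa using hedge _ (mem_filter.1 he).2
  · intro e he f hf hne v hve hvf
    exact hdisj _ (mem_filter.1 he).2 _ (mem_filter.1 hf).2
      (fun h => hne (Sym2.map.injective φ.injective h)) (φ v)
      (Sym2.mem_map.2 ⟨v, hve, rfl⟩) (Sym2.mem_map.2 ⟨v, hvf, rfl⟩)

theorem union_mem_matchings [DecidableEq V] (hμ : μ ∈ matchings G) (hν : ν ∈ matchings G)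
    (hdisj : ∀ e ∈ μ, ∀ f ∈ ν, ∀ v ∈ e, v ∉ f) : μ ∪ ν ∈ matchings G := by
  obtain ⟨hμe, hμd⟩ := mem_matchings.1 hμ
  obtain ⟨hνe, hνd⟩ := mem_matchings.1 hν
  refine mem_matchings.2 ⟨fun e he => (mem_union.1 he).elim (hμe e) (hνe e), ?_⟩
  intro e he f hf hne v hve hvf
  rcases mem_union.1 he with he | he <;> rcases mem_union.1 hf with hf | hf
  exacts [hμd e he f hf hne v hve hvf, hdisj e he f hf v hve hvf,
    hdisj f hf e he v hvf hve, hνd e he f hf hne v hve hvf]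

variable {σ : Equiv.Perm V}

theorem mem_fixedMatchings :
    μ ∈ fixedMatchings G σ ↔ μ ∈ matchings G ∧ ∀ e ∈ μ, Sym2.map σ e ∈ μ := by
  simp only [fixedMatchings, mem_filter]
  refine and_congr_right fun _ => ⟨fun h e he => h ▸ mem_image_of_mem _ he, fun h => ?_⟩
  exact eq_of_subset_of_card_le (image_subset_iff.2 h)
    (card_image_of_injective _ (Sym2.map.injective σ.injective)).ge

theorem fixedMatchings_one : fixedMatchings G 1 = matchings G := by
  ext μ
  simp [mem_fixedMatchings]

theorem notMem_of_mem_fixedMatchings (hμ : μ ∈ fixedMatchings G σ) {e : Sym2 V}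
    (he : e ∈ μ) (hmove : Sym2.map σ e ≠ e) {v : V} (hv : σ v = v) : v ∉ e := fun hve => by
  obtain ⟨hmatch, hfix⟩ := mem_fixedMatchings.1 hμ
  exact (mem_matchings.1 hmatch).2 _ (hfix e he) e he hmove v
    (hv ▸ Sym2.mem_map.2 ⟨v, hve, rfl⟩) hve

end Matchings

theorem Int.eq_add_mul_of_nonbacktracking_unit_steps {g : ℕ → ℤ} {N : ℕ}
    (hstep : ∀ i, i + 1 < N → g (i + 1) = g i + 1 ∨ g (i + 1) = g i - 1)
    (hback : ∀ i, i + 2 < N → g (i + 2) ≠ g i) :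
    ∀ i < N, g i = g 0 + i * (g 1 - g 0) := by
  have hconst : ∀ i, i + 1 < N → g (i + 1) - g i = g 1 - g 0 := by
    intro i
    induction i with
    | zero => simp
    | succ i ih =>
      intro hi
      show g (i + 2) - g (i + 1) = g 1 - g 0
      have := ih (by omega)
      have := hstep i (by omega)
      have : g (i + 2) = g (i + 1) + 1 ∨ g (i + 2) = g (i + 1) - 1 := hstep (i + 1) hi
      have := hback i hi
      omega
  intro i
  induction i with
  | zero => simp
  | succ i ih =>
    intro hi
    have := hconst i hi
    have := ih (by omega)
    push_cast
    linarith

theorem pathG_adj {n : ℕ} {u v : Fin n} :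
    (pathG n).Adj u v ↔ (u : ℕ) + 1 = v ∨ (v : ℕ) + 1 = u := by
  simp only [pathG, SimpleGraph.fromRel_adj, ne_eq, Fin.ext_iff]
  omega

theorem card_eFin_pathG (n : ℕ) : #(eFin (pathG n)) = n - 1 := by
  have : eFin (pathG n) = (range (n - 1)).attach.image fun i =>
      s(⟨i, by have := mem_range.1 i.2; omega⟩, ⟨i + 1, by have := mem_range.1 i.2; omega⟩) := by
    ext e
    induction e using Sym2.ind with
    | _ u v =>
      simp only [eFin, SimpleGraph.mem_edgeFinset, SimpleGraph.mem_edgeSet, pathG_adj, mem_image,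
        mem_attach, true_and, Subtype.exists, mem_range, Sym2.eq_iff, Fin.ext_iff]
      constructor
      · rintro (h | h)
        · exact ⟨u, by omega, by omega⟩
        · exact ⟨v, by omega, by omega⟩
      · rintro ⟨i, -, h⟩
        omega
  rw [this, card_image_of_injective, card_attach, card_range]
  intro i j h
  simp only [Sym2.eq_iff, Fin.ext_iff] at h
  exact Subtype.ext (by omega)

def pathGRevIso (n : ℕ) : pathG n ≃g pathG n where
  toEquiv := Fin.revPerm
  map_rel_iff' := by
    intro u v
    simp only [Fin.revPerm_apply, pathG_adj, Fin.val_rev]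
    omega

@[simp]
theorem pathGRevIso_apply {n : ℕ} (v : Fin n) : pathGRevIso n v = v.rev := rfl

theorem eq_one_or_eq_revPerm_of_mem_autF_pathG {n : ℕ} (hn : 2 ≤ n) {σ : Equiv.Perm (Fin n)}
    (hσ : σ ∈ autF (pathG n)) : σ = 1 ∨ σ = Fin.revPerm := by
  simp only [autF, mem_filter, mem_univ, true_and] at hσ
  -- `i ↦ σ i` is a walk with steps `±1` that never backtracks (`σ` is injective), hence affine.
  let g : ℕ → ℤ := fun i => if h : i < n then (σ ⟨i, h⟩ : ℕ) else 0
  have hg : ∀ v : Fin n, g v = (σ v : ℕ) := fun v => by simp [g]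
  have hstep : ∀ i, i + 1 < n → g (i + 1) = g i + 1 ∨ g (i + 1) = g i - 1 := by
    intro i hi
    have := (hσ ⟨i, by omega⟩ ⟨i + 1, hi⟩).2 (pathG_adj.2 (Or.inl rfl))
    simp only [g, dif_pos hi, dif_pos (show i < n by omega)]
    rw [pathG_adj] at this
    omega
  have hback : ∀ i, i + 2 < n → g (i + 2) ≠ g i := by
    intro i hi h
    simp only [g, dif_pos hi, dif_pos (show i < n by omega), Nat.cast_inj, ← Fin.ext_iff,
      σ.injective.eq_iff, Fin.mk.injEq] at h
    omega
  obtain ⟨a, s, hs, hlin⟩ : ∃ a s : ℤ, (s = 1 ∨ s = -1) ∧ ∀ v : Fin n, (σ v : ℤ) = a + v * s :=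
    ⟨g 0, g 1 - g 0, by rcases hstep 0 (by omega) with h | h <;> simp [h],
      fun v => hg v ▸ Int.eq_add_mul_of_nonbacktracking_unit_steps hstep hback v v.2⟩
  have hfirst := hlin ⟨0, by omega⟩
  have hlast := hlin ⟨n - 1, by omega⟩
  have hfirst_lt := (σ ⟨0, by omega⟩).2
  have hlast_lt := (σ ⟨n - 1, by omega⟩).2
  rcases hs with rfl | rfl
  · left
    ext v
    have := hlin v
    simp only [Equiv.Perm.coe_one, id_eq] at *
    omega
  · right
    ext v
    have := hlin v
    simp only [Fin.revPerm_apply, Fin.val_rev] at *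
    omega

theorem autF_pathG {n : ℕ} (hn : 2 ≤ n) : autF (pathG n) = {1, Fin.revPerm} := by
  ext σ
  simp only [mem_insert, mem_singleton]
  refine ⟨eq_one_or_eq_revPerm_of_mem_autF_pathG hn, ?_⟩
  rintro (rfl | rfl) <;> simp only [autF, mem_filter, mem_univ, true_and]
  · simp
  · exact fun u v => (pathGRevIso n).map_adj_iff

theorem sum_wM_one_pathG (n : ℕ) [NeZero n] :
    ∑ μ ∈ fixedMatchings (pathG n) 1, wM (pathG n) μ 1 = va 1 ^ n * Upoly n (vb 1) (vbeta 1) := by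
  rw [fixedMatchings_one, Upoly, mul_sum]
  refine sum_congr rfl fun μ hμ => ?_
  have hlen : ∀ e ∈ eFin (pathG n), eOrbLen 1 e = 1 := fun e _ => by
    simp [eOrbLen_of_sq_eq_one (one_pow 2)]
  rw [wM_of_sq_eq_one (one_pow 1) hlen (one_pow 2) (by norm_num)
    (subset_eFin_of_mem_matchings hμ), card_eFin_pathG]
  simp [mul_assoc]

section OddPath

variable {m : ℕ}

theorem revPerm_eq_self_iff (v : Fin (2 * m + 1)) : Fin.revPerm v = v ↔ (v : ℕ) = m := by
  simp only [Fin.revPerm_apply, Fin.ext_iff, Fin.val_rev]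
  omega

theorem revPerm_sq {n : ℕ} : (Fin.revPerm : Equiv.Perm (Fin n)) ^ 2 = 1 := by
  ext v
  simp [sq]

theorem card_filter_revPerm_eq_self : #{v : Fin (2 * m + 1) | Fin.revPerm v = v} = 1 :=
  card_eq_one.2 ⟨⟨m, by omega⟩, by
    ext v
    rw [mem_filter, mem_singleton, revPerm_eq_self_iff, Fin.ext_iff]
    simp⟩

theorem card_filter_revPerm_ne_self : #{v : Fin (2 * m + 1) | Fin.revPerm v ≠ v} = 2 * m := by
  simp only [ne_eq]
  rw [filter_not, card_sdiff_of_subset (filter_subset _ _), card_filter_revPerm_eq_self, card_univ,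
    Fintype.card_fin]
  omega

theorem map_revPerm_ne_of_mem_edgeSet {e : Sym2 (Fin (2 * m + 1))}
    (he : e ∈ (pathG (2 * m + 1)).edgeSet) : Sym2.map Fin.revPerm e ≠ e := by
  induction e using Sym2.ind with
  | _ u v =>
    rw [SimpleGraph.mem_edgeSet, pathG_adj] at he
    simp only [Sym2.map_mk, Fin.revPerm_apply, ne_eq, Sym2.eq_iff, Fin.ext_iff, Fin.val_rev]
    omega

def pathGLowEmb (m : ℕ) : pathG m ↪g pathG (2 * m + 1) where
  toEmbedding := Fin.castLEEmb (by omega)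
  map_rel_iff' := by
    intro u v
    simp [pathG_adj]

abbrev pathGHighEmb (m : ℕ) : pathG m ↪g pathG (2 * m + 1) :=
  (pathGRevIso _).toEmbedding.comp (pathGLowEmb m)

theorem map_pathGHighEmb (f : Sym2 (Fin m)) :
    Sym2.map (pathGHighEmb m) f = Sym2.map Fin.revPerm (Sym2.map (pathGLowEmb m) f) := by
  rw [Sym2.map_map]
  rfl

theorem map_revPerm_map_revPerm {n : ℕ} (e : Sym2 (Fin n)) :
    Sym2.map Fin.revPerm (Sym2.map Fin.revPerm e) = e := by
  simp [Sym2.map_map]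

theorem val_lt_of_mem_map_pathGLowEmb {f : Sym2 (Fin m)} {v : Fin (2 * m + 1)}
    (hv : v ∈ Sym2.map (pathGLowEmb m) f) : (v : ℕ) < m := by
  obtain ⟨u, -, rfl⟩ := Sym2.mem_map.1 hv
  exact u.2

theorem lt_val_of_mem_map_pathGHighEmb {f : Sym2 (Fin m)} {v : Fin (2 * m + 1)}
    (hv : v ∈ Sym2.map (pathGHighEmb m) f) : m < (v : ℕ) := by
  obtain ⟨u, -, rfl⟩ := Sym2.mem_map.1 hv
  have := u.2
  simp [pathGLowEmb]
  omega

theorem exists_map_pathGLowEmb_or_pathGHighEmb {e : Sym2 (Fin (2 * m + 1))}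
    (he : e ∈ (pathG (2 * m + 1)).edgeSet) (hmid : (⟨m, by omega⟩ : Fin (2 * m + 1)) ∉ e) :
    ∃ f, Sym2.map (pathGLowEmb m) f = e ∨ Sym2.map (pathGHighEmb m) f = e := by
  induction e using Sym2.ind with
  | _ u v =>
    rw [SimpleGraph.mem_edgeSet, pathG_adj] at he
    simp only [Sym2.mem_iff, not_or, Fin.ext_iff] at hmid
    by_cases hlow : (u : ℕ) < m
    · refine ⟨s(⟨u, hlow⟩, ⟨v, by omega⟩), Or.inl ?_⟩
      simp [pathGLowEmb]
    · refine ⟨s(⟨2 * m - u, by omega⟩, ⟨2 * m - v, by omega⟩), Or.inr ?_⟩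
      simp [pathGLowEmb, Fin.ext_iff]
      omega

theorem map_pathGLowEmb_ne_map_pathGHighEmb (f g : Sym2 (Fin m)) :
    Sym2.map (pathGLowEmb m) f ≠ Sym2.map (pathGHighEmb m) g := by
  induction f using Sym2.ind with
  | _ u v =>
    intro h
    have hu : pathGLowEmb m u ∈ Sym2.map (pathGHighEmb m) g := h ▸ Sym2.mem_map.2 ⟨u, by simp, rfl⟩
    exact absurd (lt_val_of_mem_map_pathGHighEmb hu) (by simp [pathGLowEmb])

def mirrorMatching (ν : Finset (Sym2 (Fin m))) : Finset (Sym2 (Fin (2 * m + 1))) :=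
  ν.image (Sym2.map (pathGLowEmb m)) ∪ ν.image (Sym2.map (pathGHighEmb m))

theorem card_mirrorMatching (ν : Finset (Sym2 (Fin m))) : #(mirrorMatching ν) = 2 * #ν := by
  rw [mirrorMatching, card_union_of_disjoint, card_image_of_injective _
    (Sym2.map.injective (pathGLowEmb m).injective), card_image_of_injective _
    (Sym2.map.injective (pathGHighEmb m).injective), two_mul]
  simp only [disjoint_left, mem_image]
  rintro _ ⟨f, -, rfl⟩ ⟨g, -, h⟩
  exact map_pathGLowEmb_ne_map_pathGHighEmb f g h.symm

theorem mirrorMatching_mem_fixedMatchings {ν : Finset (Sym2 (Fin m))}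
    (hν : ν ∈ matchings (pathG m)) :
    mirrorMatching ν ∈ fixedMatchings (pathG (2 * m + 1)) Fin.revPerm := by
  refine mem_fixedMatchings.2 ⟨union_mem_matchings (image_mem_matchings (pathGLowEmb m) hν)
    (image_mem_matchings (pathGHighEmb m) hν) ?_, ?_⟩
  · simp only [mem_image, forall_exists_index, and_imp, forall_apply_eq_imp_iff₂]
    intro f _ g _ v hvf hvg
    exact absurd (val_lt_of_mem_map_pathGLowEmb hvf) (lt_val_of_mem_map_pathGHighEmb hvg).not_gt
  · intro e he
    simp only [mirrorMatching, mem_union, mem_image] at he ⊢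
    rcases he with ⟨f, hf, rfl⟩ | ⟨f, hf, rfl⟩
    · exact Or.inr ⟨f, hf, map_pathGHighEmb f⟩
    · exact Or.inl ⟨f, hf, by rw [map_pathGHighEmb, map_revPerm_map_revPerm]⟩

theorem preimage_mirrorMatching (ν : Finset (Sym2 (Fin m))) :
    ({f | Sym2.map (pathGLowEmb m) f ∈ mirrorMatching ν} : Finset (Sym2 (Fin m))) = ν := by
  ext f
  simp only [mirrorMatching, mem_filter, mem_univ, true_and, mem_union, mem_image]
  refine ⟨?_, fun hf => Or.inl ⟨f, hf, rfl⟩⟩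
  rintro (⟨g, hg, h⟩ | ⟨g, -, h⟩)
  · rwa [← Sym2.map.injective (pathGLowEmb m).injective h]
  · exact absurd h.symm (map_pathGLowEmb_ne_map_pathGHighEmb f g)

theorem mirrorMatching_preimage {μ : Finset (Sym2 (Fin (2 * m + 1)))}
    (hμ : μ ∈ fixedMatchings (pathG (2 * m + 1)) Fin.revPerm) :
    mirrorMatching ({f | Sym2.map (pathGLowEmb m) f ∈ μ} : Finset (Sym2 (Fin m))) = μ := by
  obtain ⟨hmatch, hfix⟩ := mem_fixedMatchings.1 hμ
  ext e
  simp only [mirrorMatching, mem_union, mem_image, mem_filter, mem_univ, true_and]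
  constructor
  · rintro (⟨f, hf, rfl⟩ | ⟨f, hf, rfl⟩)
    · exact hf
    · exact map_pathGHighEmb f ▸ hfix _ hf
  · intro he
    have hedge := (mem_matchings.1 hmatch).1 e he
    have hmid := notMem_of_mem_fixedMatchings hμ he (map_revPerm_ne_of_mem_edgeSet hedge)
      ((revPerm_eq_self_iff ⟨m, by omega⟩).2 rfl)
    obtain ⟨f, rfl | rfl⟩ := exists_map_pathGLowEmb_or_pathGHighEmb hedge hmid
    · exact Or.inl ⟨f, he, rfl⟩
    · refine Or.inr ⟨f, ?_, rfl⟩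
      simpa only [map_pathGHighEmb, map_revPerm_map_revPerm] using hfix _ he

theorem sum_wM_revPerm_pathG (hm : 1 ≤ m) :
    ∑ μ ∈ fixedMatchings (pathG (2 * m + 1)) Fin.revPerm, wM (pathG (2 * m + 1)) μ Fin.revPerm =
      va 1 * va 2 ^ m * vbeta 2 * Upoly m (vb 2) (vbeta 2) := by
  rw [Upoly, mul_sum]
  refine (sum_nbij' mirrorMatching (fun μ => ({f | Sym2.map (pathGLowEmb m) f ∈ μ} : Finset _))
    (fun ν hν => mirrorMatching_mem_fixedMatchings hν)
    (fun μ hμ => preimage_mem_matchings _ (mem_fixedMatchings.1 hμ).1)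
    (fun ν _ => preimage_mirrorMatching ν) (fun μ hμ => mirrorMatching_preimage hμ)
    fun ν hν => ?_).symm
  have hle : #ν ≤ m - 1 := card_eFin_pathG m ▸ card_le_card (subset_eFin_of_mem_matchings hν)
  have hlen : ∀ e ∈ eFin (pathG (2 * m + 1)), eOrbLen Fin.revPerm e = 2 := fun e he => by
    rw [eOrbLen_of_sq_eq_one revPerm_sq,
      if_neg (map_revPerm_ne_of_mem_edgeSet (by simpa [eFin] using he))]
  rw [wM_of_sq_eq_one revPerm_sq hlen revPerm_sq le_rfl (subset_eFin_of_mem_matchings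
      (mem_fixedMatchings.1 (mirrorMatching_mem_fixedMatchings hν)).1),
    card_mirrorMatching, card_eFin_pathG, card_filter_revPerm_eq_self,
    card_filter_revPerm_ne_self, show (2 * m + 1 - 1 - 2 * #ν) / 2 = m - 1 - #ν + 1 by omega]
  simp only [Nat.mul_div_cancel_left _ two_pos, pow_succ]
  ring

end OddPath

/-- the extended Walsh series of matched paths `P_n`, `n` odd, `n ≥ 3`. -/
theorem walsh_matched_path_odd (n : ℕ) (hn : 3 ≤ n) (hodd : Odd n) :
    ∑ σ ∈ autF (pathG n), ∑ μ ∈ fixedMatchings (pathG n) σ, wM (pathG n) μ σ =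
      va 1 ^ n * Upoly n (vb 1) (vbeta 1) +
        va 1 * va 2 ^ ((n - 1) / 2) * vbeta 2 *
          Upoly ((n - 1) / 2) (vb 2) (vbeta 2) := by
  obtain ⟨m, rfl⟩ := hodd
  have hrev : (1 : Equiv.Perm (Fin (2 * m + 1))) ≠ Fin.revPerm := fun h => by
    have := congrArg (fun σ : Equiv.Perm (Fin (2 * m + 1)) => ((σ ⟨0, by omega⟩ : Fin _) : ℕ)) h
    simp only [Equiv.Perm.coe_one, id_eq, Fin.revPerm_apply, Fin.val_rev] at this
    omega
  rw [autF_pathG (by omega), sum_pair hrev, sum_wM_one_pathG, sum_wM_revPerm_pathG (by omega),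
    show (2 * m + 1 - 1) / 2 = m by omega]
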